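/- For all integers n, k, d with n ≥ k ≥ 1 and k ≤ d, the maximum number of intersecting pairs in a family of n axis-parallel boxes in ℝ^d such that no k+1 of the boxes have a point in common equals t(n, k), the number of edges of the Turán graph 𝒯(n, k). In particular, the Turán graph 𝒯(n, k) is realizable as the intersection graph of a family of n axis-parallel boxes in ℝ^d, no k+1 of which have a common point. -/

import Mathlib

/-- Number of edges of the Turán graph `𝒯(n, m)`, the complete `m`-partite graph on `n`
vertices whose vertex-class sizes are as equal as possible. -/
noncomputable def turanEdges (n m : ℕ) : ℕ :=
  (SimpleGraph.turanGraph n m).edgeFinset.card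

/-- `S ⊆ ℝ^d` is an axis-parallel box: a product `∏ᵢ [aᵢ, bᵢ]` with `aᵢ ≤ bᵢ`. -/
def IsBox {d : ℕ} (S : Set (Fin d → ℝ)) : Prop :=
  ∃ a b : Fin d → ℝ, (∀ i, a i ≤ b i) ∧
    S = Set.pi Set.univ (fun i => Set.Icc (a i) (b i))

/-- Number of intersecting pairs of an indexed family of sets: the number of unordered
pairs `{i, j}` with `i ≠ j` and `B i ∩ B j ≠ ∅`. -/
noncomputable def interPairs {n : ℕ} {α : Type*} (B : Fin n → Set α) : ℕ :=
  Set.ncard {p : Fin n × Fin n | p.1 < p.2 ∧ (B p.1 ∩ B p.2).Nonempty}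

/-!
Boxes have Helly number two: if the boxes `∏ᵢ [aᵢ, bᵢ]` pairwise meet, then the point `sup a`
lies in all of them. So when no `k + 1` boxes share a point, the intersection graph is
`K_{k+1}`-free and Turán's theorem bounds its edge count by `t(n, k)`. Conversely, put box `v`
into the slab `x_{v mod k} = ⌊v / k⌋` of the cube `[0, n]^d`: boxes in different residue classes
meet, boxes in the same class are disjoint, so the intersection graph is `𝒯(n, k)` and every
point lies in at most one box per class.
-/

open Finset

namespace SimpleGraph

theorem ncard_setOf_lt_adj_eq_card_edgeFinset {V : Type*} [LinearOrder V] [Fintype V]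
    (G : SimpleGraph V) [DecidableRel G.Adj] :
    {p : V × V | p.1 < p.2 ∧ G.Adj p.1 p.2}.ncard = #G.edgeFinset := by
  rw [← Set.ncard_coe_finset, coe_edgeFinset]
  refine Set.ncard_congr (fun p _ => s(p.1, p.2)) (fun p hp => hp.2) ?_ ?_
  · rintro ⟨a, b⟩ ⟨c, d⟩ hab hcd h
    have hinf := congrArg Sym2.inf h
    have hsup := congrArg Sym2.sup h
    simp only [Sym2.inf_mk, Sym2.sup_mk, inf_of_le_left hab.1.le, inf_of_le_left hcd.1.le,
      sup_of_le_right hab.1.le, sup_of_le_right hcd.1.le] at hinf hsup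
    rw [hinf, hsup]
  · intro e he
    induction e with
    | _ a b =>
      rcases lt_or_gt_of_ne (G.ne_of_adj he) with h | h
      · exact ⟨(a, b), ⟨h, he⟩, rfl⟩
      · exact ⟨(b, a), ⟨h, he.symm⟩, Sym2.eq_swap⟩

end SimpleGraph

def intersectionGraph {ι α : Type*} (B : ι → Set α) : SimpleGraph ι where
  Adj i j := i ≠ j ∧ (B i ∩ B j).Nonempty
  symm := ⟨fun _ _ h => ⟨h.1.symm, Set.inter_comm (B _) _ ▸ h.2⟩⟩
  loopless := ⟨fun _ h => h.1 rfl⟩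

@[simp]
theorem intersectionGraph_adj {ι α : Type*} {B : ι → Set α} {i j : ι} :
    (intersectionGraph B).Adj i j ↔ i ≠ j ∧ (B i ∩ B j).Nonempty :=
  Iff.rfl

theorem interPairs_eq_card_edgeFinset {n : ℕ} {α : Type*} (B : Fin n → Set α)
    [DecidableRel (intersectionGraph B).Adj] :
    interPairs B = #(intersectionGraph B).edgeFinset := by
  rw [interPairs, ← SimpleGraph.ncard_setOf_lt_adj_eq_card_edgeFinset]
  congr! 3 with p
  simp only [intersectionGraph_adj]
  exact ⟨fun h => ⟨h.1, h.1.ne, h.2⟩, fun h => ⟨h.1, h.2.2⟩⟩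

theorem Finset.sup'_mem_Icc_of_forall_inter_nonempty {ι α : Type*} [SemilatticeSup α]
    {t : Finset ι} (ht : t.Nonempty) {a b : ι → α}
    (h : ∀ i ∈ t, ∀ j ∈ t, (Set.Icc (a i) (b i) ∩ Set.Icc (a j) (b j)).Nonempty)
    {i : ι} (hi : i ∈ t) : t.sup' ht a ∈ Set.Icc (a i) (b i) :=
  ⟨le_sup' a hi, sup'_le ht _ fun j hj =>
    let ⟨_, hxi, hxj⟩ := h i hi j hj
    hxj.1.trans hxi.2⟩

theorem cliqueFree_intersectionGraph_of_isBox {ι : Type*} [Finite ι] {d k : ℕ}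
    {B : ι → Set (Fin d → ℝ)} (hB : ∀ i, IsBox (B i))
    (hdepth : ∀ x, {i | x ∈ B i}.ncard ≤ k) : (intersectionGraph B).CliqueFree (k + 1) := by
  intro t ht
  choose a b hab hBab using hB
  simp only [Set.pi_univ_Icc] at hBab
  have hpair : ∀ i ∈ t, ∀ j ∈ t, (Set.Icc (a i) (b i) ∩ Set.Icc (a j) (b j)).Nonempty := by
    intro i hi j hj
    by_cases hij : i = j
    · rw [hij, Set.inter_self]
      exact Set.nonempty_Icc.2 (hab j)
    · rw [← hBab, ← hBab]
      exact (ht.isClique hi hj hij).2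
  have hne : t.Nonempty := card_pos.1 (ht.card_eq ▸ k.succ_pos)
  have hsub : (t : Set ι) ⊆ {i | t.sup' hne a ∈ B i} := fun i hi => by
    show _ ∈ B i
    rw [hBab]
    exact sup'_mem_Icc_of_forall_inter_nonempty hne hpair hi
  have := Set.ncard_le_ncard hsub
  rw [Set.ncard_coe_finset, ht.card_eq] at this
  linarith [hdepth (t.sup' hne a)]

def slabBox {d : ℕ} (M : ℝ) (j : Fin d) (s : ℝ) : Set (Fin d → ℝ) :=
  Set.Icc (Function.update 0 j s) (Function.update (fun _ => M) j s)

theorem isBox_slabBox {d : ℕ} {M : ℝ} (hM : 0 ≤ M) (j : Fin d) (s : ℝ) :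
    IsBox (slabBox M j s) := by
  refine ⟨_, _, fun i => ?_, (Set.pi_univ_Icc _ _).symm⟩
  by_cases hij : i = j
  · subst hij; simp
  · simpa [hij] using hM

theorem apply_eq_of_mem_slabBox {d : ℕ} {M : ℝ} {j : Fin d} {s : ℝ} {x : Fin d → ℝ}
    (hx : x ∈ slabBox M j s) : x j = s := by
  have h₁ := hx.1 j
  have h₂ := hx.2 j
  simp only [Function.update_self] at h₁ h₂
  exact le_antisymm h₂ h₁

theorem slabBox_inter_nonempty {d : ℕ} {M : ℝ} {j j' : Fin d} (hjj' : j ≠ j') {s s' : ℝ}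
    (hs : s ∈ Set.Icc 0 M) (hs' : s' ∈ Set.Icc 0 M) :
    (slabBox M j s ∩ slabBox M j' s').Nonempty := by
  refine ⟨Function.update (fun _ => s') j s,
    ⟨fun i => ?_, fun i => ?_⟩, ⟨fun i => ?_, fun i => ?_⟩⟩ <;>
    by_cases hi : i = j <;> by_cases hi' : i = j' <;> simp_all [Function.update]

section TuranBoxes

variable {n k d : ℕ} (hk : 0 < k) (hkd : k ≤ d)

def turanBoxes (v : Fin n) : Set (Fin d → ℝ) :=
  slabBox n ⟨v % k, (Nat.mod_lt _ hk).trans_le hkd⟩ ((v / k : ℕ) : ℝ)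

theorem isBox_turanBoxes (v : Fin n) : IsBox (turanBoxes hk hkd v) :=
  isBox_slabBox n.cast_nonneg _ _

variable {hk hkd}

theorem eq_of_mem_turanBoxes {x : Fin d → ℝ} {v w : Fin n} (hv : x ∈ turanBoxes hk hkd v)
    (hw : x ∈ turanBoxes hk hkd w) (hvw : (v : ℕ) % k = w % k) : v = w := by
  have hv' := apply_eq_of_mem_slabBox hv
  have hw' := apply_eq_of_mem_slabBox hw
  simp only [hvw] at hv'
  have hdiv : (v : ℕ) / k = w / k := by exact_mod_cast hv'.symm.trans hw'
  rw [Fin.ext_iff, ← Nat.div_add_mod v k, ← Nat.div_add_mod w k, hdiv, hvw]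

theorem turanBoxes_inter_nonempty {v w : Fin n} (hvw : (v : ℕ) % k ≠ w % k) :
    (turanBoxes hk hkd v ∩ turanBoxes hk hkd w).Nonempty := by
  have hlevel (u : Fin n) : ((u / k : ℕ) : ℝ) ∈ Set.Icc 0 (n : ℝ) :=
    ⟨by positivity, by exact_mod_cast (Nat.div_le_self _ _).trans u.is_lt.le⟩
  exact slabBox_inter_nonempty (by simpa [Fin.ext_iff] using hvw) (hlevel v) (hlevel w)

theorem intersectionGraph_turanBoxes :
    intersectionGraph (turanBoxes (n := n) hk hkd) = SimpleGraph.turanGraph n k := by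
  ext v w
  rw [intersectionGraph_adj, SimpleGraph.turanGraph_adj]
  refine ⟨fun ⟨hne, x, hv, hw⟩ hvw => hne (eq_of_mem_turanBoxes hv hw hvw), fun hvw => ?_⟩
  exact ⟨fun h => hvw (h ▸ rfl), turanBoxes_inter_nonempty hvw⟩

theorem ncard_setOf_mem_turanBoxes_le (x : Fin d → ℝ) :
    {v : Fin n | x ∈ turanBoxes hk hkd v}.ncard ≤ k := by
  have hinj : Set.InjOn (fun v : Fin n => (⟨v % k, Nat.mod_lt _ hk⟩ : Fin k))
      {v | x ∈ turanBoxes hk hkd v} :=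
    fun v hv w hw h => eq_of_mem_turanBoxes (hk := hk) (hkd := hkd) hv hw (Fin.ext_iff.1 h)
  calc _ = _ := hinj.ncard_image.symm
    _ ≤ Nat.card (Fin k) := Set.ncard_le_card _
    _ = k := Nat.card_fin k

end TuranBoxes

theorem boxes_extremal_small_k_general (n k d : ℕ) (hk : 1 ≤ k) (hkd : k ≤ d) :
    (∀ B : Fin n → Set (Fin d → ℝ), (∀ i, IsBox (B i)) →
        (∀ x : Fin d → ℝ, Set.ncard {i | x ∈ B i} ≤ k) →
        interPairs B ≤ turanEdges n k) ∧
    (∃ B : Fin n → Set (Fin d → ℝ), (∀ i, IsBox (B i)) ∧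
        (∀ x : Fin d → ℝ, Set.ncard {i | x ∈ B i} ≤ k) ∧
        interPairs B = turanEdges n k) := by
  classical
  refine ⟨fun B hB hdepth => ?_, ?_⟩
  · rw [interPairs_eq_card_edgeFinset, turanEdges]
    exact (SimpleGraph.isTuranMaximal_turanGraph hk).2
      (cliqueFree_intersectionGraph_of_isBox hB hdepth)
  · refine ⟨turanBoxes hk hkd, isBox_turanBoxes hk hkd, ncard_setOf_mem_turanBoxes_le, ?_⟩
    rw [interPairs_eq_card_edgeFinset, turanEdges]
    congr! 2
    exact intersectionGraph_turanBoxes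

/-- For `n ≥ k ≥ 1` with `k ≤ d`, the maximal number of intersecting pairs in a family of
`n` axis-parallel boxes in `ℝ^d`, no `k+1` of which have a common point, equals `t(n, k)`;
in particular the Turán graph `𝒯(n,k)` is realizable as the intersection graph of such a
family. -/
theorem boxes_extremal_small_k (n k d : ℕ) (hkn : k ≤ n) (hk : 1 ≤ k) (hkd : k ≤ d) :
    (∀ B : Fin n → Set (Fin d → ℝ), (∀ i, IsBox (B i)) →
        (∀ x : Fin d → ℝ, Set.ncard {i | x ∈ B i} ≤ k) →
        interPairs B ≤ turanEdges n k) ∧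
    (∃ B : Fin n → Set (Fin d → ℝ), (∀ i, IsBox (B i)) ∧
        (∀ x : Fin d → ℝ, Set.ncard {i | x ∈ B i} ≤ k) ∧
        interPairs B = turanEdges n k) :=
  boxes_extremal_small_k_general n k d hk hkd
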